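/- For every point w = (t, q_0, …, q_{2k−1}) ∈ ℝ × (ℝⁿ)^{2k}, the Jacobian determinant of the restricted Legendre–Ostrogradsky map FL at w satisfies |det D(FL)(w)| = |det W(t, q_0, …, q_k)|^k, where W is the Hessian matrix of L in the variable q_k. -/

import Mathlib

/-!
The momentum `p̂^{r-1}` is a function of `t, q_0, …, q_{2k-r}` only, and its derivative with respect
to `q_{2k-r}` is `(-1)^{k-r} W`. Both facts come from one observation about the total derivative:
if `f` depends on `q_0, …, q_m` only, then `d_T f` depends on `q_0, …, q_{m+1}` only and
`∂(d_T f)/∂q_{m+1} = ∂f/∂q_m`. Hence, once the output `p̂^{r-1}` is paired with the input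
`q_{2k-r}`, the Jacobian matrix of `FL` is block lower triangular, with diagonal blocks `1`
(for `t`), `k` identity blocks (for `q_0, …, q_{k-1}`) and `k` blocks `±W`.
-/

open scoped ContDiff RealInnerProductSpace

noncomputable section

/-- `ℝⁿ` as a Euclidean space. -/
abbrev Evec (n : ℕ) := EuclideanSpace ℝ (Fin n)

/-- The partial gradient `∂f/∂q_i` of a function `f : ℝ × (ℝⁿ)^N → ℝ`
with respect to the variable `q_i`. -/
noncomputable def pgradN {n N : ℕ} (f : ℝ × (Fin N → Evec n) → ℝ)
    (i : Fin N) (x : ℝ × (Fin N → Evec n)) : Evec n :=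
  gradient (fun v => f (x.1, Function.update x.2 i v)) (x.2 i)

/-- The total time derivative `d_T f = ∂f/∂t + ∑_i q_{i+1} · ∂f/∂q_i` of a function
on `ℝ × (ℝⁿ)^N` (functions of `(t, q_0, …, q_m)` are regarded as functions on this
space, not depending on the higher variables, for which the extra terms vanish). -/
noncomputable def dT {n N : ℕ} {F : Type*} [NormedAddCommGroup F] [NormedSpace ℝ F]
    (f : ℝ × (Fin N → Evec n) → F) : ℝ × (Fin N → Evec n) → F :=
  fun x => deriv (fun s => f (s, x.2)) x.1 +
    ∑ i : Fin N, if h : (i : ℕ) + 1 < N then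
      fderiv ℝ (fun v => f (x.1, Function.update x.2 i v)) (x.2 i) (x.2 ⟨(i : ℕ)+1, h⟩)
    else 0

/-- A `k`-th order Lagrangian regarded as a function on `ℝ × (ℝⁿ)^N`, `k+1 ≤ N`. -/
def extendL {n k N : ℕ} (h : k + 1 ≤ N) (L : ℝ × (Fin (k+1) → Evec n) → ℝ) :
    ℝ × (Fin N → Evec n) → ℝ :=
  fun x => L (x.1, fun i => x.2 ⟨(i : ℕ), by have := i.isLt; omega⟩)

/-- The Jacobi–Ostrogradsky momentum function
`p̂^{r-1} = ∑_{i=0}^{k-r} (-1)^i d_T^i (∂L/∂q_{r+i})`, as a function on `ℝ × (ℝⁿ)^N`. -/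
noncomputable def hatP {n k N : ℕ} (h : k + 1 ≤ N) (L : ℝ × (Fin (k+1) → Evec n) → ℝ)
    (r : ℕ) (hr1 : 1 ≤ r) (hrk : r ≤ k) : ℝ × (Fin N → Evec n) → Evec n :=
  fun x => ∑ i : Fin (k - r + 1),
    ((-1:ℝ)^(i : ℕ)) •
      (dT^[(i : ℕ)] (pgradN (extendL h L) ⟨r + (i : ℕ), by have := i.isLt; omega⟩)) x

/-- The Hessian matrix `W` of a `k`-th order Lagrangian with respect to the highest
velocity variable `q_k`: `W A B = ∂²L/∂q_k^B ∂q_k^A`. -/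
noncomputable def hessQk {n k : ℕ} (L : ℝ × (Fin (k+1) → Evec n) → ℝ)
    (x : ℝ × (Fin (k+1) → Evec n)) : Matrix (Fin n) (Fin n) ℝ :=
  fun A B =>
    fderiv ℝ (fun v => gradient (fun w => L (x.1, Function.update x.2 (Fin.last k) w)) v A)
      (x.2 (Fin.last k)) (EuclideanSpace.single B 1)

/-- The restricted Legendre–Ostrogradsky map
`FL(t, q_0, …, q_{2k-1}) = (t, q_0, …, q_{k-1}, p̂^0, …, p̂^{k-1})`. -/
noncomputable def legendreFL {n k : ℕ} (hk : 1 ≤ k) (L : ℝ × (Fin (k+1) → Evec n) → ℝ) :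
    ℝ × (Fin (2*k) → Evec n) → ℝ × (Fin (2*k) → Evec n) :=
  fun x => (x.1, fun j => if h : (j : ℕ) < k then x.2 ⟨(j : ℕ), by omega⟩
    else hatP (by omega) L ((j : ℕ) - k + 1) (by omega)
      (by have := j.isLt; omega) x)

/-- Truncation of a point of `ℝ × (ℝⁿ)^{2k}` to a point of `ℝ × (ℝⁿ)^{k+1}`. -/
def truncK {n k : ℕ} (hk : 1 ≤ k) (w : ℝ × (Fin (2*k) → Evec n)) :
    ℝ × (Fin (k+1) → Evec n) :=
  (w.1, fun i => w.2 ⟨(i : ℕ), by have := i.isLt; omega⟩)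

lemma Fin.prod_ite_val_lt_eq_pow {M : Type*} [CommMonoid M] (k : ℕ) (c : M) :
    ∏ p : Fin (2 * k), (if (p : ℕ) < k then 1 else c) = c ^ k := by
  rw [Finset.prod_ite, Finset.prod_const_one, one_mul, Finset.prod_const, Finset.filter_not,
    Finset.card_sdiff_of_subset (Finset.filter_subset _ _), Fin.card_filter_val_lt,
    Finset.card_univ, Fintype.card_fin]
  congr 1
  omega

namespace Legendre

section DependsUpTo

variable {n N : ℕ}

def jetProj (n : ℕ) {N : ℕ} (m : ℕ) :
    (ℝ × (Fin N → Evec n)) →L[ℝ] ℝ × (Fin N → Evec n) :=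
  (ContinuousLinearMap.fst ℝ _ _).prod <| ContinuousLinearMap.pi fun i : Fin N =>
    if (i : ℕ) ≤ m then (ContinuousLinearMap.proj i).comp (ContinuousLinearMap.snd ℝ _ _)
    else 0

@[simp] lemma jetProj_apply (m : ℕ) (x : ℝ × (Fin N → Evec n)) :
    jetProj n m x = (x.1, fun i : Fin N => if (i : ℕ) ≤ m then x.2 i else 0) := by
  refine Prod.ext rfl (funext fun i => ?_)
  by_cases h : (i : ℕ) ≤ m <;> simp [jetProj, h]

lemma jetProj_jetProj {m m' : ℕ} (h : m ≤ m') (x : ℝ × (Fin N → Evec n)) :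
    jetProj n m (jetProj n m' x) = jetProj n m x := by
  simp only [jetProj_apply]
  refine Prod.ext rfl (funext fun i => ?_)
  dsimp only
  split_ifs <;> first | rfl | omega

lemma jetProj_single_of_lt {m : ℕ} {i : Fin N} (h : m < (i : ℕ)) (u : Evec n) :
    jetProj n m ((0, Pi.single i u) : ℝ × (Fin N → Evec n)) = 0 := by
  simp only [jetProj_apply]
  refine Prod.ext rfl (funext fun j => ?_)
  by_cases hj : j = i
  · subst hj; simp [h.not_ge]
  · simp [hj]

lemma jetProj_prodMk_update {m : ℕ} {i : Fin N} (hi : (i : ℕ) ≤ m)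
    (x : ℝ × (Fin N → Evec n)) (v : Evec n) :
    jetProj n m (x.1, Function.update x.2 i v) =
      ((jetProj n m x).1, Function.update (jetProj n m x).2 i v) := by
  simp only [jetProj_apply]
  refine Prod.ext rfl (funext fun j => ?_)
  by_cases hj : j = i
  · subst hj; simp [hi]
  · simp [hj]

def DependsUpTo {F : Type*} (m : ℕ) (f : ℝ × (Fin N → Evec n) → F) : Prop :=
  ∀ x, f (jetProj n m x) = f x

lemma DependsUpTo.mono {F : Type*} {m m' : ℕ} {f : ℝ × (Fin N → Evec n) → F}
    (hf : DependsUpTo m f) (h : m ≤ m') : DependsUpTo m' f := fun x => by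
  rw [← hf x, ← hf (jetProj n m' x), jetProj_jetProj h]

variable {F : Type*} [NormedAddCommGroup F] [NormedSpace ℝ F] {m : ℕ}
  {f : ℝ × (Fin N → Evec n) → F}

lemma DependsUpTo.fderiv_eq (hf : DependsUpTo m f) (hd : Differentiable ℝ f)
    (x : ℝ × (Fin N → Evec n)) :
    fderiv ℝ f x = (fderiv ℝ f (jetProj n m x)).comp (jetProj n m) := by
  have hfe : f = f ∘ jetProj n m := funext fun y => (hf y).symm
  conv_lhs => rw [hfe]
  exact ((hd _).hasFDerivAt.comp x (jetProj n m).hasFDerivAt).fderiv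

lemma DependsUpTo.fderiv_apply_single_eq_zero (hf : DependsUpTo m f) (hd : Differentiable ℝ f)
    {j : Fin N} (h : m < (j : ℕ)) (x : ℝ × (Fin N → Evec n)) (u : Evec n) :
    fderiv ℝ f x (0, Pi.single j u) = 0 := by
  rw [hf.fderiv_eq hd, ContinuousLinearMap.comp_apply, jetProj_single_of_lt h, map_zero]

protected lemma DependsUpTo.fderiv (hf : DependsUpTo m f) (hd : Differentiable ℝ f) :
    DependsUpTo m (fderiv ℝ f) := fun x => by
  rw [hf.fderiv_eq hd x, hf.fderiv_eq hd (jetProj n m x), jetProj_jetProj le_rfl]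
  refine ContinuousLinearMap.ext fun v => ?_
  simp only [ContinuousLinearMap.comp_apply, jetProj_jetProj le_rfl]

end DependsUpTo

section TotalDerivative

variable {n N : ℕ}

/-- The linear part of the vector field `(1, q_1, …, q_{N-1}, 0)` along which `d_T`
differentiates. -/
def jetShift (n N : ℕ) : (ℝ × (Fin N → Evec n)) →L[ℝ] ℝ × (Fin N → Evec n) :=
  (ContinuousLinearMap.inr ℝ ℝ _).comp <| ContinuousLinearMap.pi fun i : Fin N =>
    if h : (i : ℕ) + 1 < N then
      (ContinuousLinearMap.proj ⟨(i : ℕ) + 1, h⟩).comp (ContinuousLinearMap.snd ℝ _ _)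
    else 0

@[simp] lemma jetShift_apply (x : ℝ × (Fin N → Evec n)) :
    jetShift n N x =
      (0, fun i : Fin N => if h : (i : ℕ) + 1 < N then x.2 ⟨(i : ℕ) + 1, h⟩ else 0) := by
  refine Prod.ext rfl (funext fun i => ?_)
  by_cases h : (i : ℕ) + 1 < N <;> simp [jetShift, h]

lemma jetShift_single {i j : Fin N} (hij : (j : ℕ) = i + 1) (u : Evec n) :
    jetShift n N (0, Pi.single j u) = (0, Pi.single i u) := by
  rw [jetShift_apply]
  refine Prod.ext rfl (funext fun l => ?_)
  by_cases hl : l = i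
  · subst hl
    have : (⟨(l : ℕ) + 1, hij ▸ j.isLt⟩ : Fin N) = j := Fin.ext hij.symm
    simp [hij ▸ j.isLt, this]
  · have hne : ∀ h : (l : ℕ) + 1 < N, (⟨(l : ℕ) + 1, h⟩ : Fin N) ≠ j := fun _ h =>
      hl (Fin.ext (by have := congrArg Fin.val h; dsimp only at this; omega))
    by_cases h : (l : ℕ) + 1 < N <;> simp [h, hl, hne]

lemma jetProj_jetShift_jetProj (m : ℕ) (x : ℝ × (Fin N → Evec n)) :
    jetProj n m (jetShift n N (jetProj n (m + 1) x)) = jetProj n m (jetShift n N x) := by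
  simp only [jetProj_apply, jetShift_apply]
  refine Prod.ext rfl (funext fun i => ?_)
  dsimp only
  split_ifs <;> first | rfl | omega

variable {F : Type*} [NormedAddCommGroup F] [NormedSpace ℝ F]
  {f : ℝ × (Fin N → Evec n) → F}

lemma hasFDerivAt_prodMk_update (x : ℝ × (Fin N → Evec n)) (i : Fin N) (v : Evec n) :
    HasFDerivAt (fun v => (x.1, Function.update x.2 i v))
      ((ContinuousLinearMap.inr ℝ ℝ _).comp
        (ContinuousLinearMap.single ℝ (fun _ : Fin N => Evec n) i)) v := by
  have he : (fun v : Evec n => (x.1, Function.update x.2 i v)) = fun v =>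
      (x.1, Function.update x.2 i 0) + (ContinuousLinearMap.inr ℝ ℝ _).comp
        (ContinuousLinearMap.single ℝ (fun _ : Fin N => Evec n) i) v := by
    funext v
    refine Prod.ext (by simp) (funext fun j => ?_)
    by_cases h : j = i
    · subst h; simp
    · simp [h]
  rw [he]
  exact (ContinuousLinearMap.hasFDerivAt _).const_add _

lemma fderiv_comp_update_apply {x : ℝ × (Fin N → Evec n)} (hf : DifferentiableAt ℝ f x)
    (i : Fin N) (u : Evec n) :
    fderiv ℝ (fun v => f (x.1, Function.update x.2 i v)) (x.2 i) u =
      fderiv ℝ f x (0, Pi.single i u) := by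
  have hf' : HasFDerivAt f (fderiv ℝ f x) (x.1, Function.update x.2 i (x.2 i)) := by
    simpa using hf.hasFDerivAt
  have := (hf'.comp (x.2 i) (hasFDerivAt_prodMk_update x i (x.2 i))).fderiv
  simp only [Function.comp_def] at this
  simp [this]

lemma deriv_comp_time_slice {x : ℝ × (Fin N → Evec n)} (hf : DifferentiableAt ℝ f x) :
    deriv (fun s => f (s, x.2)) x.1 = fderiv ℝ f x (1, 0) := by
  have hf' : HasFDerivAt f (fderiv ℝ f x) (x.1, x.2) := hf.hasFDerivAt
  exact (hf'.comp_hasDerivAt x.1 ((hasDerivAt_id x.1).prodMk (hasDerivAt_const _ _))).deriv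

lemma dT_eq_fderiv (hf : Differentiable ℝ f) (x : ℝ × (Fin N → Evec n)) :
    dT f x = fderiv ℝ f x ((1, 0) + jetShift n N x) := by
  have hshift : jetShift n N x = ∑ i : Fin N,
      (0, Pi.single i (if h : (i : ℕ) + 1 < N then x.2 ⟨(i : ℕ) + 1, h⟩ else 0)) := by
    refine Prod.ext (by simp [Prod.fst_sum]) ?_
    simp only [jetShift_apply, Prod.snd_sum, Finset.univ_sum_single]
  rw [dT, deriv_comp_time_slice (hf x), map_add, hshift, map_sum]
  congr 1
  refine Finset.sum_congr rfl fun i _ => ?_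
  split_ifs
  · exact fderiv_comp_update_apply (hf x) i _
  · rw [Pi.single_zero, Prod.mk_zero_zero, map_zero]

lemma contDiff_dT (hf : ContDiff ℝ ∞ f) : ContDiff ℝ ∞ (dT f) := by
  rw [show dT f = fun x => fderiv ℝ f x ((1, 0) + jetShift n N x) from
    funext (dT_eq_fderiv (hf.differentiable (by simp)))]
  exact (hf.fderiv_right le_rfl).clm_apply (contDiff_const.add (jetShift n N).contDiff)

lemma contDiff_iterate_dT (hf : ContDiff ℝ ∞ f) (l : ℕ) : ContDiff ℝ ∞ (dT^[l] f) := by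
  induction l with
  | zero => exact hf
  | succ l ih => rw [Function.iterate_succ_apply']; exact contDiff_dT ih

protected lemma DependsUpTo.dT {m : ℕ} (hf : DependsUpTo m f) (hd : Differentiable ℝ f) :
    DependsUpTo (m + 1) (dT f) := fun x => by
  rw [dT_eq_fderiv hd, dT_eq_fderiv hd, hf.fderiv_eq hd, hf.fderiv_eq hd x,
    ContinuousLinearMap.comp_apply, ContinuousLinearMap.comp_apply,
    jetProj_jetProj (Nat.le_succ m)]
  congr 1
  rw [map_add, map_add, jetProj_jetShift_jetProj]

lemma DependsUpTo.iterate_dT {m : ℕ} (hf : DependsUpTo m f) (hs : ContDiff ℝ ∞ f) (l : ℕ) :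
    DependsUpTo (m + l) (dT^[l] f) := by
  induction l with
  | zero => exact hf
  | succ l ih =>
    rw [Function.iterate_succ_apply']
    exact ih.dT ((contDiff_iterate_dT hs l).differentiable (by simp))

/-- Only the term `q_{i+1} · ∂f/∂q_i` of `d_T f` involves `q_{i+1}`. -/
lemma DependsUpTo.fderiv_dT_apply_single {i j : Fin N} (hf : DependsUpTo i f)
    (hs : ContDiff ℝ 2 f) (hj : (j : ℕ) = i + 1) (x : ℝ × (Fin N → Evec n)) (u : Evec n) :
    fderiv ℝ (dT f) x (0, Pi.single j u) = fderiv ℝ f x (0, Pi.single i u) := by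
  have hd : Differentiable ℝ f := hs.differentiable (by simp)
  have hd' : Differentiable ℝ (fderiv ℝ f) :=
    (hs.fderiv_right (m := 1) (by norm_num)).differentiable (by simp)
  have hX : HasFDerivAt (fun y => ((1, 0) + jetShift n N y : ℝ × (Fin N → Evec n)))
      (jetShift n N) x := (jetShift n N).hasFDerivAt.const_add _
  rw [show dT f = fun y => fderiv ℝ f y ((1, 0) + jetShift n N y) from
      funext (dT_eq_fderiv hd), ((hd' x).hasFDerivAt.clm_apply hX).fderiv,
    add_apply, ContinuousLinearMap.comp_apply, jetShift_single hj,
    ContinuousLinearMap.flip_apply,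
    (hf.fderiv hd).fderiv_apply_single_eq_zero hd' (by omega) x u]
  simp

lemma DependsUpTo.fderiv_iterate_dT_apply_single {i j : Fin N} (hf : DependsUpTo i f)
    (hs : ContDiff ℝ ∞ f) (l : ℕ) (hj : (j : ℕ) = i + l) (x : ℝ × (Fin N → Evec n))
    (u : Evec n) :
    fderiv ℝ (dT^[l] f) x (0, Pi.single j u) = fderiv ℝ f x (0, Pi.single i u) := by
  induction l generalizing j with
  | zero => obtain rfl : j = i := Fin.ext hj; rfl
  | succ l ih =>
    rw [Function.iterate_succ_apply', ← ih (j := ⟨i + l, by omega⟩) rfl]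
    exact (hf.iterate_dT hs l).fderiv_dT_apply_single
      ((contDiff_iterate_dT hs l).of_le ENat.LEInfty.out) hj x u

end TotalDerivative

section PartialGradient

variable {n N : ℕ}

lemma gradient_apply (g : Evec n → ℝ) (v : Evec n) (A : Fin n) :
    gradient g v A = fderiv ℝ g v (EuclideanSpace.single A 1) := by
  rw [← toDual_gradient, InnerProductSpace.toDual_apply_apply,
    EuclideanSpace.inner_single_right]
  simp

lemma fderiv_apply_coord {E : Type*} [NormedAddCommGroup E] [NormedSpace ℝ E] {G : E → Evec n}
    {y : E} (hG : DifferentiableAt ℝ G y) (d : E) (A : Fin n) :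
    fderiv ℝ (fun y => G y A) y d = fderiv ℝ G y d A :=
  congrArg (· d) ((PiLp.hasFDerivAt_apply 2 (G y) A).comp y hG.hasFDerivAt).fderiv

variable {g : ℝ × (Fin N → Evec n) → ℝ}

lemma pgradN_apply {x : ℝ × (Fin N → Evec n)} (hg : DifferentiableAt ℝ g x) (i : Fin N)
    (A : Fin n) :
    pgradN g i x A = fderiv ℝ g x (0, Pi.single i (EuclideanSpace.single A 1)) := by
  rw [pgradN, gradient_apply, fderiv_comp_update_apply hg]

lemma contDiff_pgradN {d : WithTop ℕ∞} (hg : ContDiff ℝ (d + 1) g) (i : Fin N) :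
    ContDiff ℝ d (pgradN g i) := by
  refine contDiff_piLp' 2 fun A => ?_
  simp only [pgradN_apply (hg.differentiable (by simp) _)]
  exact (hg.fderiv_right le_rfl).clm_apply contDiff_const

lemma pgradN_prodMk_update (x : ℝ × (Fin N → Evec n)) (i : Fin N) (v : Evec n) :
    pgradN g i (x.1, Function.update x.2 i v) =
      gradient (fun v => g (x.1, Function.update x.2 i v)) v := by
  simp [pgradN]

lemma DependsUpTo.pgradN {m : ℕ} (hg : DependsUpTo m g) {i : Fin N} (hi : (i : ℕ) ≤ m) :
    DependsUpTo m (pgradN g i) := fun x => by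
  have hxi : (jetProj n m x).2 i = x.2 i := by simp [hi]
  simp only [_root_.pgradN, hxi, ← jetProj_prodMk_update hi, hg _]

end PartialGradient

section Momentum

variable {n k N : ℕ} (h : k + 1 ≤ N) {L : ℝ × (Fin (k + 1) → Evec n) → ℝ}

lemma contDiff_extendL {d : WithTop ℕ∞} (hL : ContDiff ℝ d L) : ContDiff ℝ d (extendL h L) :=
  hL.comp (contDiff_fst.prodMk
    (contDiff_pi.2 fun _ => (contDiff_apply ℝ (Evec n) _).comp contDiff_snd))

lemma dependsUpTo_extendL (L : ℝ × (Fin (k + 1) → Evec n) → ℝ) :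
    DependsUpTo k (extendL h L) :=
  fun x => by
    simp only [extendL, jetProj_apply]
    congr 3 with i
    simp [Nat.lt_succ_iff.1 i.isLt]

variable (hL : ContDiff ℝ ∞ L) (r : ℕ) (hr1 : 1 ≤ r) (hrk : r ≤ k)
include hL

lemma contDiff_hatP : ContDiff ℝ ∞ (hatP h L r hr1 hrk) :=
  ContDiff.sum fun i _ => (contDiff_iterate_dT
    (contDiff_pgradN (d := ∞) (contDiff_extendL h hL) _) i).const_smul _

lemma dependsUpTo_hatP : DependsUpTo (2 * k - r) (hatP h L r hr1 hrk) := fun x => by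
  refine Finset.sum_congr rfl fun i _ => ?_
  have hi := i.isLt
  have hterm := ((dependsUpTo_extendL h L).pgradN (i := ⟨r + i, by omega⟩)
      (by dsimp only; omega)).iterate_dT (contDiff_pgradN (d := ∞) (contDiff_extendL h hL) _) i
  rw [(hterm.mono (by omega : k + i ≤ 2 * k - r)) x]

/-- Only the last term `(-1)^{k-r} d_T^{k-r} (∂L/∂q_k)` of `p̂^{r-1}` involves `q_{2k-r}`. -/
lemma fderiv_hatP_apply_single {j K : Fin N} (hj : (j : ℕ) = 2 * k - r) (hK : (K : ℕ) = k)
    (x : ℝ × (Fin N → Evec n)) (u : Evec n) :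
    fderiv ℝ (hatP h L r hr1 hrk) x (0, Pi.single j u) =
      (-1 : ℝ) ^ (k - r) • fderiv ℝ (pgradN (extendL h L) K) x (0, Pi.single K u) := by
  have hF := contDiff_pgradN (d := ∞) (contDiff_extendL h hL)
  have hterm : ∀ i : Fin (k - r + 1), ContDiff ℝ ∞ fun x =>
      (-1 : ℝ) ^ (i : ℕ) • dT^[i] (pgradN (extendL h L) ⟨r + i, by omega⟩) x :=
    fun i => (contDiff_iterate_dT (hF _) i).const_smul _
  rw [show hatP h L r hr1 hrk = fun x => ∑ i : Fin (k - r + 1),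
      (-1 : ℝ) ^ (i : ℕ) • dT^[i] (pgradN (extendL h L) ⟨r + i, by omega⟩) x from rfl,
    fderiv_fun_sum fun i _ => ((hterm i).differentiable (by simp)).differentiableAt,
    sum_apply,
    Finset.sum_eq_single_of_mem (⟨k - r, by omega⟩ : Fin (k - r + 1)) (Finset.mem_univ _)]
  · have hKr : (⟨r + (k - r), by omega⟩ : Fin N) = K := Fin.ext (by dsimp only; omega)
    rw [fderiv_fun_const_smul ((contDiff_iterate_dT (hF _) _).differentiable (by simp) _),
      smul_apply]
    simp only [hKr]
    rw [(((dependsUpTo_extendL h L).mono hK.ge).pgradN le_rfl).fderiv_iterate_dT_apply_single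
      (hF K) _ (by omega)]
  · intro i _ hi
    have hlt : (i : ℕ) < k - r :=
      lt_of_le_of_ne (Nat.lt_succ_iff.1 i.isLt) fun he => hi (Fin.ext he)
    have hdep := ((dependsUpTo_extendL h L).pgradN (i := ⟨r + i, by omega⟩)
      (by dsimp only; omega)).iterate_dT (hF _) i
    rw [fderiv_fun_const_smul ((contDiff_iterate_dT (hF _) _).differentiable (by simp) _),
      smul_apply,
      hdep.fderiv_apply_single_eq_zero ((contDiff_iterate_dT (hF _) _).differentiable (by simp))
        (by omega), smul_zero]

end Momentum

section Hessian

variable {n k N : ℕ}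

lemma hessQk_apply (h : k + 1 ≤ N) {L : ℝ × (Fin (k + 1) → Evec n) → ℝ}
    (hL : ContDiff ℝ ∞ L) (x : ℝ × (Fin N → Evec n)) {K : Fin N} (hK : (K : ℕ) = k) (A B : Fin n) :
    hessQk L (x.1, fun i => x.2 ⟨i, by omega⟩) A B =
      fderiv ℝ (pgradN (extendL h L) K) x (0, Pi.single K (EuclideanSpace.single B 1)) A := by
  have hG := contDiff_pgradN (d := ∞) (contDiff_extendL h hL) K
  have hsec : ∀ v, L (x.1, Function.update (fun i : Fin (k + 1) => x.2 ⟨i, by omega⟩)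
      (Fin.last k) v) = extendL h L (x.1, Function.update x.2 K v) := fun v => by
    simp only [extendL]
    congr 2 with i
    by_cases hi : i = Fin.last k
    · subst hi; simp [show (⟨k, by omega⟩ : Fin N) = K from Fin.ext hK.symm]
    · have : (⟨i, by omega⟩ : Fin N) ≠ K := fun he => hi (Fin.ext (by
        have := congrArg Fin.val he; dsimp only at this; rw [Fin.val_last]; omega))
      simp [Function.update_of_ne hi, Function.update_of_ne this]
  have hlast : (⟨(Fin.last k : ℕ), by omega⟩ : Fin N) = K := Fin.ext (by simp [hK])
  have hGd : Differentiable ℝ (pgradN (extendL h L) K) := hG.differentiable (by simp)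
  simp only [hessQk, hsec, ← pgradN_prodMk_update, hlast]
  rw [fderiv_comp_update_apply (f := fun y => pgradN (extendL h L) K y A)
      ((differentiable_piLp 2).1 hGd A x), fderiv_apply_coord (hGd x)]

lemma det_fderiv_pgradN_comp_single (h : k + 1 ≤ N) {L : ℝ × (Fin (k + 1) → Evec n) → ℝ}
    (hL : ContDiff ℝ ∞ L) (x : ℝ × (Fin N → Evec n)) {K : Fin N} (hK : (K : ℕ) = k) :
    LinearMap.det ((fderiv ℝ (pgradN (extendL h L) K) x).toLinearMap ∘ₗ
        (LinearMap.inr ℝ ℝ _ ∘ₗ LinearMap.single ℝ (fun _ => Evec n) K)) =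
      (hessQk L (x.1, fun i => x.2 ⟨i, by omega⟩)).det := by
  rw [← LinearMap.det_toMatrix (EuclideanSpace.basisFun (Fin n) ℝ).toBasis]
  congr 1
  ext A B
  rw [LinearMap.toMatrix_apply, hessQk_apply h hL x hK]
  simp

end Hessian

section JetBasis

variable {R E ι : Type*} [Semiring R] [AddCommMonoid E] [Module R E] {N : ℕ}

def jetBasis (N : ℕ) (bE : Module.Basis ι R E) :
    Module.Basis (Unit ⊕ Fin N × ι) R (R × (Fin N → E)) :=
  (Module.Basis.singleton Unit R).prod
    ((Pi.basis fun _ : Fin N => bE).reindex (Equiv.sigmaEquivProd _ _))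

variable (bE : Module.Basis ι R E)

lemma jetBasis_inl : jetBasis N bE (Sum.inl ()) = (1, 0) := by
  rw [jetBasis, Module.Basis.prod_apply]; simp

lemma jetBasis_inr (i : Fin N) (a : ι) :
    jetBasis N bE (Sum.inr (i, a)) = (0, Pi.single i (bE a)) := by
  rw [jetBasis, Module.Basis.prod_apply]; simp [Pi.basis_apply]

lemma jetBasis_repr_inl (x : R × (Fin N → E)) : (jetBasis N bE).repr x (Sum.inl ()) = x.1 := by
  rw [jetBasis, Module.Basis.prod_repr_inl]; simp

lemma jetBasis_repr_inr (x : R × (Fin N → E)) (j : Fin N) (a : ι) :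
    (jetBasis N bE).repr x (Sum.inr (j, a)) = bE.repr (x.2 j) a := by
  rw [jetBasis, Module.Basis.prod_repr_inr]; simp [Pi.basis_repr]

def blockMap (T : (R × (Fin N → E)) →ₗ[R] R × (Fin N → E)) (j i : Fin N) : E →ₗ[R] E :=
  (LinearMap.proj j ∘ₗ LinearMap.snd R R _) ∘ₗ T ∘ₗ
    (LinearMap.inr R R _ ∘ₗ LinearMap.single R (fun _ => E) i)

lemma blockMap_apply (T : (R × (Fin N → E)) →ₗ[R] R × (Fin N → E)) (j i : Fin N) (u : E) :
    blockMap T j i u = (T (0, Pi.single i u)).2 j := rfl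

end JetBasis

section BlockTriangular

/-- The slot of the basis vector `jetBasis N bE r`, with `⊥` for the time direction. -/
def jetSlot {ι : Type*} {N : ℕ} : Unit ⊕ Fin N × ι → WithBot (Fin N) :=
  Sum.elim (fun _ => ⊥) fun r => r.1

variable {R ι : Type*} [CommRing R] {N : ℕ}

lemma det_toSquareBlock_jetSlot_bot [Fintype ι] [DecidableEq ι]
    (A : Matrix (Unit ⊕ Fin N × ι) (Unit ⊕ Fin N × ι) R) :
    (A.toSquareBlock jetSlot ⊥).det = A (Sum.inl ()) (Sum.inl ()) := by
  let e : Unit ≃ {r : Unit ⊕ Fin N × ι // jetSlot r = ⊥} :=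
    Equiv.ofBijective (fun _ => ⟨Sum.inl (), rfl⟩) ⟨fun _ _ _ => rfl, by
      rintro ⟨_ | ⟨i, a⟩, h⟩
      · exact ⟨(), rfl⟩
      · exact absurd h WithBot.coe_ne_bot⟩
  rw [← Matrix.det_submatrix_equiv_self e, Matrix.det_unique]
  rfl

lemma det_toSquareBlock_jetSlot_coe [Fintype ι] [DecidableEq ι]
    (A : Matrix (Unit ⊕ Fin N × ι) (Unit ⊕ Fin N × ι) R) (p : Fin N) :
    (A.toSquareBlock jetSlot p).det =
      (A.submatrix (fun a => Sum.inr (p, a)) fun a => Sum.inr (p, a)).det := by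
  let e : ι ≃ {r : Unit ⊕ Fin N × ι // jetSlot r = p} :=
    Equiv.ofBijective (fun a => ⟨Sum.inr (p, a), rfl⟩)
      ⟨fun a a' h => by simpa using congrArg Subtype.val h, by
        rintro ⟨_ | ⟨i, a⟩, h⟩
        · exact absurd h.symm WithBot.coe_ne_bot
        · obtain rfl : i = p := WithBot.coe_inj.1 h
          exact ⟨a, rfl⟩⟩
  rw [← Matrix.det_submatrix_equiv_self e]
  rfl

end BlockTriangular

section Determinant

variable {E : Type*} [AddCommGroup E] [Module ℝ E] [FiniteDimensional ℝ E] {N : ℕ}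

theorem abs_det_eq_prod_abs_det_blockMap (T : (ℝ × (Fin N → E)) →ₗ[ℝ] ℝ × (Fin N → E))
    (τ : Equiv.Perm (Fin N)) (hfst : ∀ x, (T x).1 = x.1)
    (htri : ∀ p i (u : E), p < i → (T (0, Pi.single i u)).2 (τ p) = 0) :
    |LinearMap.det T| = ∏ p, |LinearMap.det (blockMap T (τ p) p)| := by
  classical
  let bE := Module.finBasis ℝ E
  let b := jetBasis N bE
  -- the matrix of `T` with its rows permuted by `τ` is block lower triangular
  let ρ : Equiv.Perm (Unit ⊕ Fin N × Fin (Module.finrank ℝ E)) :=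
    Equiv.sumCongr (Equiv.refl _) (Equiv.prodCongr τ (Equiv.refl _))
  let M := (LinearMap.toMatrix b b T).submatrix ρ id
  have hM_inl : ∀ c, M (Sum.inl ()) c = (T (b c)).1 := fun c => by
    simp only [M, Matrix.submatrix_apply, LinearMap.toMatrix_apply]
    exact jetBasis_repr_inl bE _
  have hM_inr : ∀ p a c, M (Sum.inr (p, a)) c = bE.repr ((T (b c)).2 (τ p)) a := fun p a c => by
    simp only [M, Matrix.submatrix_apply, LinearMap.toMatrix_apply]
    exact jetBasis_repr_inr bE _ _ _
  have hdet : |LinearMap.det T| = |M.det| := by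
    rw [Matrix.det_permute, ← LinearMap.det_toMatrix b, abs_mul]
    rcases Int.units_eq_one_or (Equiv.Perm.sign ρ) with h | h <;> simp [h]
  have hM : M.transpose.BlockTriangular jetSlot := by
    rintro (_ | ⟨i, a⟩) c hc
    · exact absurd hc not_lt_bot
    rcases c with _ | ⟨p, a'⟩
    · simp [hM_inl, b, jetBasis_inr, hfst]
    · simp [hM_inr, b, jetBasis_inr, htri p i _ (WithBot.coe_lt_coe.1 hc)]
  have hsplit : ∏ s : WithBot (Fin N), (M.transpose.toSquareBlock jetSlot s).det =
      (M.transpose.toSquareBlock jetSlot ⊥).det *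
        ∏ p : Fin N, (M.transpose.toSquareBlock jetSlot p).det :=
    Fintype.prod_option _
  have hblock : ∀ p : Fin N, (M.transpose.toSquareBlock jetSlot p).det =
      LinearMap.det (blockMap T (τ p) p) := fun p => by
    rw [det_toSquareBlock_jetSlot_coe, ← LinearMap.det_toMatrix bE,
      ← Matrix.det_transpose (LinearMap.toMatrix bE bE _)]
    congr 1
    ext a a'
    rw [Matrix.submatrix_apply, Matrix.transpose_apply, hM_inr, Matrix.transpose_apply,
      LinearMap.toMatrix_apply, blockMap_apply, jetBasis_inr]
  rw [hdet, ← Matrix.det_transpose, hM.det_fintype, hsplit, det_toSquareBlock_jetSlot_bot,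
    Matrix.transpose_apply, hM_inl, jetBasis_inl, hfst, one_mul, Finset.abs_prod]
  exact Finset.prod_congr rfl fun p _ => congrArg abs (hblock p)

end Determinant

section LegendreMap

variable {n k : ℕ}

/-- Pairs the output slot `k + r - 1` of `p̂^{r-1}` with the slot of `q_{2k-r}`, the highest
variable it depends on; the slots `< k`, where `FL` is the identity, are fixed. -/
def legendrePairing (k : ℕ) : Equiv.Perm (Fin (2 * k)) :=
  Function.Involutive.toPerm
    (fun j => if h : (j : ℕ) < k then j else ⟨3 * k - 1 - j, by have := j.isLt; omega⟩)
    fun j => by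
      have := j.isLt
      by_cases hj : (j : ℕ) < k
      · simp only [hj, dif_pos]
      · have h' : ¬ 3 * k - 1 - (j : ℕ) < k := by omega
        simp only [hj, h', dif_neg, not_false_eq_true]
        ext; simp only; omega

lemma legendrePairing_of_lt {j : Fin (2 * k)} (hj : (j : ℕ) < k) : legendrePairing k j = j :=
  dif_pos hj

lemma val_legendrePairing_of_le {j : Fin (2 * k)} (hj : k ≤ (j : ℕ)) :
    (legendrePairing k j : ℕ) = 3 * k - 1 - j :=
  congrArg Fin.val (dif_neg hj.not_gt)

variable (hk : 1 ≤ k) {L : ℝ × (Fin (k + 1) → Evec n) → ℝ} (hL : ContDiff ℝ ∞ L)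
include hL

lemma contDiff_legendreFL : ContDiff ℝ ∞ (legendreFL hk L) := by
  refine contDiff_fst.prodMk (contDiff_pi.2 fun j => ?_)
  by_cases hj : (j : ℕ) < k
  · simp only [dif_pos hj]
    exact (contDiff_apply ℝ (Evec n) _).comp contDiff_snd
  · simp only [dif_neg hj]
    exact contDiff_hatP _ hL _ _ _

variable (w : ℝ × (Fin (2 * k) → Evec n))

lemma fderiv_legendreFL_fst (v : ℝ × (Fin (2 * k) → Evec n)) :
    (fderiv ℝ (legendreFL hk L) w v).1 = v.1 := by
  have h := fderiv.fst ((contDiff_legendreFL hk hL).differentiable (by simp) w)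
  rw [show (fun x => (legendreFL hk L x).1) = Prod.fst from rfl, fderiv_fst] at h
  exact (congrArg (· v) h).symm

lemma fderiv_legendreFL_snd (v : ℝ × (Fin (2 * k) → Evec n)) (j : Fin (2 * k)) :
    (fderiv ℝ (legendreFL hk L) w v).2 j = fderiv ℝ (fun x => (legendreFL hk L x).2 j) w v := by
  have hd := (contDiff_legendreFL hk hL).differentiable (by simp) w
  have h := fderiv_apply (Φ := fun x => (legendreFL hk L x).2) hd.snd j
  rw [h, fderiv.snd hd]
  rfl

lemma fderiv_legendreFL_snd_of_lt (v : ℝ × (Fin (2 * k) → Evec n)) {j : Fin (2 * k)}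
    (hj : (j : ℕ) < k) : (fderiv ℝ (legendreFL hk L) w v).2 j = v.2 j := by
  rw [fderiv_legendreFL_snd hk hL]
  simp only [legendreFL, dif_pos hj]
  exact congrArg (· v)
    ((ContinuousLinearMap.proj (R := ℝ) (φ := fun _ : Fin (2 * k) => Evec n) j).comp
      (ContinuousLinearMap.snd ℝ ℝ _)).fderiv

lemma fderiv_legendreFL_snd_of_le (v : ℝ × (Fin (2 * k) → Evec n)) {j : Fin (2 * k)}
    (hj : k ≤ (j : ℕ)) : (fderiv ℝ (legendreFL hk L) w v).2 j =
      fderiv ℝ (hatP (by omega) L ((j : ℕ) - k + 1) (by omega) (by omega)) w v := by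
  rw [fderiv_legendreFL_snd hk hL]
  simp only [legendreFL, dif_neg hj.not_gt]

lemma fderiv_legendreFL_single_pairing_eq_zero {p i : Fin (2 * k)} (hpi : p < i) (u : Evec n) :
    (fderiv ℝ (legendreFL hk L) w (0, Pi.single i u)).2 (legendrePairing k p) = 0 := by
  by_cases hp : (p : ℕ) < k
  · rw [legendrePairing_of_lt hp, fderiv_legendreFL_snd_of_lt hk hL w _ hp]
    exact Pi.single_eq_of_ne hpi.ne _
  · have hval := val_legendrePairing_of_le (not_lt.1 hp)
    have := p.isLt
    rw [fderiv_legendreFL_snd_of_le hk hL w _ (by omega)]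
    exact (dependsUpTo_hatP _ hL _ _ _).fderiv_apply_single_eq_zero
      ((contDiff_hatP _ hL _ _ _).differentiable (by simp))
      (by simp only [Fin.lt_def] at hpi; omega) w u

lemma abs_det_blockMap_legendreFL (p : Fin (2 * k)) :
    |LinearMap.det
        (blockMap (fderiv ℝ (legendreFL hk L) w).toLinearMap (legendrePairing k p) p)| =
      if (p : ℕ) < k then 1 else |(hessQk L (truncK hk w)).det| := by
  split_ifs with hp
  · suffices blockMap (fderiv ℝ (legendreFL hk L) w).toLinearMap (legendrePairing k p) p =
        LinearMap.id by simp [this]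
    ext u : 1
    rw [blockMap_apply, legendrePairing_of_lt hp, ContinuousLinearMap.coe_coe,
      fderiv_legendreFL_snd_of_lt hk hL w _ hp]
    simp
  · have hval := val_legendrePairing_of_le (not_lt.1 hp)
    have := p.isLt
    let K : Fin (2 * k) := ⟨k, by omega⟩
    suffices blockMap (fderiv ℝ (legendreFL hk L) w).toLinearMap (legendrePairing k p) p =
        (-1 : ℝ) ^ (k - ((legendrePairing k p : ℕ) - k + 1)) •
          ((fderiv ℝ (pgradN (extendL (by omega) L) K) w).toLinearMap ∘ₗ
            (LinearMap.inr ℝ ℝ _ ∘ₗ LinearMap.single ℝ (fun _ => Evec n) K)) by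
      rw [this, LinearMap.det_smul, det_fderiv_pgradN_comp_single _ hL w rfl, abs_mul, abs_pow,
        abs_pow, abs_neg, abs_one, one_pow, one_pow, one_mul]
      rfl
    ext u : 1
    rw [blockMap_apply, ContinuousLinearMap.coe_coe,
      fderiv_legendreFL_snd_of_le hk hL w _ (by omega),
      fderiv_hatP_apply_single _ hL _ _ _ (K := K) (by omega) rfl]
    rfl

end LegendreMap

end Legendre

open Legendre

theorem stmt3_general (n k : ℕ) (hk : 1 ≤ k)
    (L : ℝ × (Fin (k+1) → Evec n) → ℝ) (hL : ContDiff ℝ ∞ L)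
    (w : ℝ × (Fin (2*k) → Evec n)) :
    |LinearMap.det ((fderiv ℝ (legendreFL hk L) w).toLinearMap)| =
      |(hessQk L (truncK hk w)).det| ^ k := by
  rw [abs_det_eq_prod_abs_det_blockMap _ (legendrePairing k)
      (fderiv_legendreFL_fst hk hL w)
      fun p i u hpi => fderiv_legendreFL_single_pairing_eq_zero hk hL w hpi u,
    Finset.prod_congr rfl fun p _ => abs_det_blockMap_legendreFL hk hL w p,
    Fin.prod_ite_val_lt_eq_pow]

/-- For every point `w = (t, q_0, …, q_{2k-1})`, the Jacobian determinant of
the restricted Legendre–Ostrogradsky map `FL` at `w` satisfies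
`|det D(FL)(w)| = |det W(t, q_0, …, q_k)|^k`, where `W` is the Hessian of `L` in `q_k`. -/
theorem stmt3 (n k : ℕ) (hn : 1 ≤ n) (hk : 1 ≤ k)
    (L : ℝ × (Fin (k+1) → Evec n) → ℝ) (hL : ContDiff ℝ ∞ L)
    (w : ℝ × (Fin (2*k) → Evec n)) :
    |LinearMap.det ((fderiv ℝ (legendreFL hk L) w).toLinearMap)| =
      |(hessQk L (truncK hk w)).det| ^ k :=
  stmt3_general n k hk L hL w
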